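/- Continuity of type B persistence diagrams: for constructible persistence modules F, G valued in an essentially small abelian category C, the erosion distance between their type B persistence diagrams is bounded by their interleaving distance: d_E(F_B, G_B) ≤ d_I(F, G). Concretely, if F and G are ε-interleaved, then for all intervals I ∈ Dgm, dF_B(Grow^ε(I)) ⪯ dG_B(I) and dG_B(Grow^ε(I)) ⪯ dF_B(I) in the ordered Grothendieck group B(C). -/

import Mathlib

open CategoryTheory CategoryTheory.Limits
open scoped Classical

/-- The poset `Dgm`: half-open intervals `[p,q)` with `p<q` together with `[p,∞)`. -/
def Dgm : Type := {x : ℝ × EReal // (x.1 : EReal) < x.2}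

/-- `Grow^ε` sends `[p,q)` to `[p-ε, q+ε)` and `[p,∞)` to `[p-ε,∞)`. -/
noncomputable def Dgm.grow (ε : ℝ) (hε : 0 ≤ ε) (I : Dgm) : Dgm :=
  ⟨(I.1.1 - ε, I.1.2 + (ε : EReal)), by
    calc ((I.1.1 - ε : ℝ) : EReal) ≤ (I.1.1 : EReal) :=
          EReal.coe_le_coe_iff.mpr (sub_le_self _ hε)
      _ < I.1.2 := I.2
      _ ≤ I.1.2 + (ε : EReal) := le_add_of_nonneg_right (by exact_mod_cast hε)⟩

/-- The shift functor on the poset `(ℝ, ≤)` viewed as a category: `r ↦ r + ε`. -/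
def Shift (ε : ℝ) : ℝ ⥤ ℝ where
  obj r := r + ε
  map {r r'} f := homOfLE (show r + ε ≤ r' + ε by have := leOfHom f; linarith)

variable (C : Type) [SmallCategory C] [Abelian C]

/-- Isomorphism classes of objects of `C`. -/
abbrev Cls : Type := Quotient (isIsomorphicSetoid C)

/-- Relations coming from short exact sequences in `C`. -/
def BRel : Set (FreeAbelianGroup (Cls C)) :=
  {x | ∃ S : ShortComplex C, S.ShortExact ∧
    x = FreeAbelianGroup.of ⟦S.X₂⟧ - FreeAbelianGroup.of ⟦S.X₁⟧ - FreeAbelianGroup.of ⟦S.X₃⟧}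

/-- The Grothendieck group `B(C)` of the abelian category `C`. -/
def BGroup : Type := FreeAbelianGroup (Cls C) ⧸ AddSubgroup.closure (BRel C)

instance : AddCommGroup (BGroup C) :=
  inferInstanceAs (AddCommGroup (FreeAbelianGroup (Cls C) ⧸ AddSubgroup.closure (BRel C)))

/-- The class of an object of `C` in `B(C)`. -/
def clsB (a : C) : BGroup C := QuotientAddGroup.mk (FreeAbelianGroup.of ⟦a⟧)

/-- The translation-invariant partial order on `B(C)`: the positive cone is generated by
classes of objects. -/
def leB (x y : BGroup C) : Prop :=
  y - x ∈ AddSubmonoid.closure (Set.range (clsB C))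

/-- The "rank function" `d F_B : Dgm → B(C)` of a persistence module constructible with
respect to `S = {s 1 < ⋯ < s n}`, using a fixed small `δ > 0`. -/
noncomputable def dFB (n : ℕ) (s : ℕ → ℝ) (δ : ℝ) (F : ℝ ⥤ C) (I : Dgm) : BGroup C :=
  if I.1.2 = ⊤ then
    clsB C (image (F.map (homOfLE (le_max_left I.1.1 (s (n + 1))))))
  else if ∃ i : ℕ, 1 ≤ i ∧ i ≤ n ∧ (s i : EReal) = I.1.2 then
    clsB C (image (F.map (homOfLE (le_max_left I.1.1 (I.1.2.toReal - δ)))))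
  else
    clsB C (image (F.map (homOfLE (le_max_left I.1.1 I.1.2.toReal))))

/-!
An `ε`-interleaving factors `F(p - ε ⟶ c)` through `G(p ⟶ b)` whenever `c ≥ max p b + ε`, so
the class of the image of the first map is at most that of the second: images shrink under
pre- and post-composition, by a monomorphism into and an epimorphism onto them. The endpoint
conventions of `dF_B` only cause trouble when the right end `q + ε` of `Grow^ε I` is a critical
value of `F` (so `dF_B` reads `F` at `q + ε - δ`) while `q` is not one of `G`; then `G` is
constant on some `(e, q]` with `q - δ ≤ e < q`, and `F` is constant on `[q + ε - δ, q + ε)`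
because the critical values of `F` are more than `δ` apart.
-/

open Set

theorem exists_Ioc_inter_eq_empty_of_finite {α : Type*} [TopologicalSpace α] [LinearOrder α]
    [OrderTopology α] [NoMinOrder α] {S : Set α} (hS : S.Finite) {q : α} (hq : q ∉ S) :
    ∃ l < q, Ioc l q ∩ S = ∅ := by
  obtain ⟨l, hl, hsub⟩ :=
    exists_Ioc_subset_of_mem_nhds (hS.isClosed.isOpen_compl.mem_nhds hq) (exists_lt q)
  exact ⟨l, hl, subset_empty_iff.mp fun x hx => hsub hx.1 hx.2⟩

theorem Ioc_inter_image_Icc_eq_empty_of_le {s : ℕ → ℝ} (hs : StrictMono s) {n : ℕ} {a : ℝ}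
    (ha : s (n + 1) ≤ a) (b : ℝ) : Ioc a b ∩ s '' Icc 1 n = ∅ := by
  refine eq_empty_iff_forall_notMem.mpr ?_
  rintro _ ⟨⟨hax, -⟩, j, ⟨-, hjn⟩, rfl⟩
  have : s j < s (n + 1) := hs (Nat.lt_succ_of_le hjn)
  linarith

theorem Ioc_inter_image_Icc_eq_empty_of_gap {s : ℕ → ℝ} (hs : StrictMono s) {n : ℕ} {δ : ℝ}
    (hδ : ∀ i ≤ n, δ < s (i + 1) - s i) {i : ℕ} {a b : ℝ} (ha : s i - δ ≤ a) (hb : b < s i) :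
    Ioc a b ∩ s '' Icc 1 n = ∅ := by
  refine eq_empty_iff_forall_notMem.mpr ?_
  rintro _ ⟨⟨hax, hxb⟩, j, ⟨-, hjn⟩, rfl⟩
  have hji : j + 1 ≤ i := hs.lt_iff_lt.mp (hxb.trans_lt hb)
  have : s (j + 1) ≤ s i := hs.monotone hji
  linarith [hδ j hjn]

theorem map_homOfLE_trans {P D : Type*} [Preorder P] [Category D] (F : P ⥤ D) {a b c : P}
    (hab : a ≤ b) (hbc : b ≤ c) :
    F.map (homOfLE (hab.trans hbc)) = F.map (homOfLE hab) ≫ F.map (homOfLE hbc) := by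
  rw [← F.map_comp, homOfLE_comp]

theorem exists_map_homOfLE_eq_comp_map_comp {D : Type*} [Category D] {F G : ℝ ⥤ D} {ε : ℝ}
    (hε : 0 ≤ ε) (φ : F ⟶ Shift ε ⋙ G) (ψ : G ⟶ Shift ε ⋙ F)
    (hφψ : ∀ r : ℝ, φ.app r ≫ ψ.app (r + ε) =
      F.map (homOfLE (show r ≤ r + ε + ε by linarith)))
    {x z w y : ℝ} (hxz : x + ε ≤ z) (hzw : z ≤ w) (hwy : w + ε ≤ y) :
    ∃ (u : F.obj x ⟶ G.obj z) (v : G.obj w ⟶ F.obj y),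
      F.map (homOfLE (show x ≤ y by linarith)) = u ≫ G.map (homOfLE hzw) ≫ v := by
  -- Stated over `(Shift ε).obj` rather than `· + ε`, so that the endpoints of all morphisms
  -- below match syntactically and `rw` can rewrite inside the compositions.
  have hxz' : (Shift ε).obj x ≤ z := hxz
  have hwy' : (Shift ε).obj w ≤ y := hwy
  have hcomp : φ.app x ≫ ψ.app ((Shift ε).obj x) =
      F.map (homOfLE (show x ≤ (Shift ε).obj ((Shift ε).obj x) from
        show x ≤ x + ε + ε by linarith)) := hφψ x
  refine ⟨φ.app x ≫ G.map (homOfLE hxz'), ψ.app w ≫ F.map (homOfLE hwy'), ?_⟩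
  rw [Category.assoc, ← G.map_comp_assoc, homOfLE_comp, ψ.naturality_assoc, reassoc_of% hcomp,
    Functor.comp_map, ← F.map_comp, ← F.map_comp]
  rfl

section GrothendieckOrder

variable {C}

theorem clsB_eq_of_iso {X Y : C} (e : X ≅ Y) : clsB C X = clsB C Y := by
  rw [clsB, clsB, show (⟦X⟧ : Cls C) = ⟦Y⟧ from Quotient.sound ⟨e⟩]

theorem leB_trans {x y z : BGroup C} (hxy : leB C x y) (hyz : leB C y z) : leB C x z := by
  simpa only [leB, sub_add_sub_cancel] using add_mem hyz hxy

theorem clsB_of_shortExact {S : ShortComplex C} (hS : S.ShortExact) :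
    clsB C S.X₂ = clsB C S.X₁ + clsB C S.X₃ := by
  have hrel : clsB C S.X₂ - clsB C S.X₁ - clsB C S.X₃ = 0 :=
    (QuotientAddGroup.eq_zero_iff _).mpr (AddSubgroup.subset_closure ⟨S, hS, rfl⟩)
  rw [← sub_eq_zero, ← hrel]
  abel

theorem leB_clsB_of_mono {X Y : C} (f : X ⟶ Y) [Mono f] : leB C (clsB C X) (clsB C Y) := by
  have hS : (ShortComplex.mk f (cokernel.π f) (cokernel.condition f)).ShortExact :=
    { exact := ShortComplex.exact_of_g_is_cokernel _ (cokernelIsCokernel f) }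
  rw [leB, clsB_of_shortExact hS, add_sub_cancel_left]
  exact AddSubmonoid.subset_closure ⟨_, rfl⟩

theorem leB_clsB_of_epi {X Y : C} (f : X ⟶ Y) [Epi f] : leB C (clsB C Y) (clsB C X) := by
  have hS : (ShortComplex.mk (kernel.ι f) f (kernel.condition f)).ShortExact :=
    { exact := ShortComplex.exact_of_f_is_kernel _ (kernelIsKernel f) }
  rw [leB, clsB_of_shortExact hS, add_sub_cancel_right]
  exact AddSubmonoid.subset_closure ⟨_, rfl⟩

theorem leB_clsB_image_comp_left {X Y Z : C} (u : X ⟶ Y) (g : Y ⟶ Z) :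
    leB C (clsB C (image (u ≫ g))) (clsB C (image g)) :=
  leB_clsB_of_mono (image.preComp u g)

theorem leB_clsB_image_comp_right {X Y Z : C} (g : X ⟶ Y) (v : Y ⟶ Z) :
    leB C (clsB C (image (g ≫ v))) (clsB C (image g)) := by
  have hfac : (factorThruImage g ≫ factorThruImage (image.ι g ≫ v)) ≫
      image.ι (image.ι g ≫ v) = g ≫ v := by
    simp
  rw [clsB_eq_of_iso (image.isoStrongEpiMono _ _ hfac).symm]
  exact leB_clsB_of_epi (factorThruImage (image.ι g ≫ v))

theorem clsB_image_congr {X Y : C} {f g : X ⟶ Y} (h : f = g) :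
    clsB C (image f) = clsB C (image g) := by
  subst h; rfl

theorem clsB_image_comp_of_isIso {X Y Z : C} (g : X ⟶ Y) (v : Y ⟶ Z) [IsIso v] :
    clsB C (image (g ≫ v)) = clsB C (image g) :=
  clsB_eq_of_iso (image.compIso g v).symm

end GrothendieckOrder

section RankB

variable {C}

/-- The clamped rank used by `dFB`: for `b < a` it is the class of `F a`, not of zero. -/
noncomputable def rankB (F : ℝ ⥤ C) (a b : ℝ) : BGroup C :=
  clsB C (image (F.map (homOfLE (le_max_left a b))))

theorem rankB_of_le (F : ℝ ⥤ C) {a b : ℝ} (h : a ≤ b) :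
    rankB F a b = clsB C (image (F.map (homOfLE h))) := by
  have key : ∀ c (hc : max a b = c) (h' : a ≤ c),
      rankB F a b = clsB C (image (F.map (homOfLE h'))) := by
    rintro _ rfl _; rfl
  exact key b (max_eq_right h) h

theorem leB_rankB_of_le (F : ℝ ⥤ C) (a : ℝ) {b b' : ℝ} (hb : b ≤ b') :
    leB C (rankB F a b') (rankB F a b) := by
  rw [rankB, clsB_image_congr (map_homOfLE_trans F (le_max_left a b) (max_le_max_left a hb))]
  exact leB_clsB_image_comp_right _ _

theorem rankB_eq_of_Ioc_inter_eq_empty {F : ℝ ⥤ C} {S : Set ℝ}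
    (hF : ∀ (p q : ℝ) (h : p ≤ q), Ioc p q ∩ S = ∅ → IsIso (F.map (homOfLE h)))
    (a : ℝ) {b b' : ℝ} (hb : b ≤ b') (hS : Ioc b b' ∩ S = ∅) :
    rankB F a b' = rankB F a b := by
  have hsub : Ioc (max a b) (max a b') ⊆ Ioc b b' := fun x ⟨hx, hx'⟩ =>
    ⟨(le_max_right a b).trans_lt hx, (le_max_iff.mp hx').resolve_left
      (not_le.mpr ((le_max_left a b).trans_lt hx))⟩
  have := hF _ _ (max_le_max_left a hb)
    (subset_empty_iff.mp (hS ▸ inter_subset_inter_left S hsub))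
  rw [rankB, clsB_image_congr (map_homOfLE_trans F (le_max_left a b) (max_le_max_left a hb)),
    clsB_image_comp_of_isIso]
  rfl

theorem leB_rankB_of_interleaving {F G : ℝ ⥤ C} {ε : ℝ} (hε : 0 ≤ ε)
    (φ : F ⟶ Shift ε ⋙ G) (ψ : G ⟶ Shift ε ⋙ F)
    (hφψ : ∀ r : ℝ, φ.app r ≫ ψ.app (r + ε) =
      F.map (homOfLE (show r ≤ r + ε + ε by linarith)))
    (a b c : ℝ) (hc : max a b + ε ≤ c) :
    leB C (rankB F (a - ε) c) (rankB G a b) := by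
  obtain ⟨u, v, hfac⟩ := exists_map_homOfLE_eq_comp_map_comp hε φ ψ hφψ
    (show a - ε + ε ≤ a by linarith) (le_max_left a b) hc
  rw [rankB_of_le F (show a - ε ≤ c by linarith [le_max_left a b]), clsB_image_congr hfac]
  exact leB_trans (leB_clsB_image_comp_left _ _) (leB_clsB_image_comp_right _ _)

end RankB

section Diagram

variable {C}

theorem dFB_of_eq_top (n : ℕ) (s : ℕ → ℝ) (δ : ℝ) (F : ℝ ⥤ C) {I : Dgm} (hI : I.1.2 = ⊤) :
    dFB C n s δ F I = rankB F I.1.1 (s (n + 1)) :=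
  if_pos hI

theorem dFB_of_eq_coe (n : ℕ) (s : ℕ → ℝ) (δ : ℝ) (F : ℝ ⥤ C) {I : Dgm} {q : ℝ}
    (hI : I.1.2 = q) :
    dFB C n s δ F I = rankB F I.1.1 (if q ∈ s '' Icc 1 n then q - δ else q) := by
  obtain ⟨⟨p, _⟩, _⟩ := I
  subst hI
  simp only [dFB, EReal.coe_ne_top, ↓reduceIte, EReal.toReal_coe, EReal.coe_eq_coe_iff,
    mem_image, mem_Icc, and_assoc]
  split_ifs <;> rfl

theorem exists_rankB_eq_of_finite {G : ℝ ⥤ C} {T : Set ℝ}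
    (hG : ∀ (p q : ℝ) (h : p ≤ q), Ioc p q ∩ T = ∅ → IsIso (G.map (homOfLE h)))
    (hT : T.Finite) {δ : ℝ} (hδ : 0 < δ) (a q : ℝ) :
    ∃ e, q - δ ≤ e ∧ e < q ∧ rankB G a e = rankB G a (if q ∈ T then q - δ else q) := by
  split_ifs with hq
  · exact ⟨q - δ, le_rfl, by linarith, rfl⟩
  · obtain ⟨l, hlq, hl⟩ := exists_Ioc_inter_eq_empty_of_finite hT hq
    have he : max l (q - δ) < q := max_lt hlq (by linarith)
    refine ⟨max l (q - δ), le_max_right _ _, he,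
      (rankB_eq_of_Ioc_inter_eq_empty hG a he.le ?_).symm⟩
    exact subset_empty_iff.mp
      (hl ▸ inter_subset_inter_left T (Ioc_subset_Ioc_left (le_max_left _ _)))

theorem leB_rankB_grow_of_lt {F G : ℝ ⥤ C} {n : ℕ} {s : ℕ → ℝ} (hs : StrictMono s)
    (hF : ∀ (p q : ℝ) (h : p ≤ q), Ioc p q ∩ s '' Icc 1 n = ∅ → IsIso (F.map (homOfLE h)))
    {T : Set ℝ} (hT : T.Finite)
    (hG : ∀ (p q : ℝ) (h : p ≤ q), Ioc p q ∩ T = ∅ → IsIso (G.map (homOfLE h)))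
    {δ : ℝ} (hδ : 0 < δ) (hδF : ∀ i ≤ n, δ < s (i + 1) - s i)
    {ε : ℝ} (hε : 0 ≤ ε) (φ : F ⟶ Shift ε ⋙ G) (ψ : G ⟶ Shift ε ⋙ F)
    (hφψ : ∀ r : ℝ, φ.app r ≫ ψ.app (r + ε) =
      F.map (homOfLE (show r ≤ r + ε + ε by linarith)))
    {p q : ℝ} (hpq : p < q) :
    leB C (rankB F (p - ε) (if q + ε ∈ s '' Icc 1 n then q + ε - δ else q + ε))
      (rankB G p (if q ∈ T then q - δ else q)) := by
  by_cases hcrit : q + ε ∈ s '' Icc 1 n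
  · rw [if_pos hcrit]
    obtain ⟨i, -, hsi⟩ := hcrit
    obtain ⟨e, hqe, heq, hrank⟩ := exists_rankB_eq_of_finite hG hT hδ p q
    have hpe : max p e < q := max_lt hpq heq
    have hgap := Ioc_inter_image_Icc_eq_empty_of_gap (a := q + ε - δ) (b := max p e + ε)
      hs hδF (by rw [hsi]) (by rw [hsi]; linarith)
    rw [← hrank, ← rankB_eq_of_Ioc_inter_eq_empty hF (p - ε)
      (by linarith [le_max_right p e]) hgap]
    exact leB_rankB_of_interleaving hε φ ψ hφψ p e _ le_rfl
  · rw [if_neg hcrit]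
    refine leB_trans (leB_rankB_of_interleaving hε φ ψ hφψ p q (q + ε) ?_)
      (leB_rankB_of_le G p (by split_ifs <;> linarith))
    rw [max_eq_right hpq.le]

theorem leB_rankB_grow_top {F G : ℝ ⥤ C} {n : ℕ} {s : ℕ → ℝ} (hs : StrictMono s)
    (hF : ∀ (p q : ℝ) (h : p ≤ q), Ioc p q ∩ s '' Icc 1 n = ∅ → IsIso (F.map (homOfLE h)))
    {ε : ℝ} (hε : 0 ≤ ε) (φ : F ⟶ Shift ε ⋙ G) (ψ : G ⟶ Shift ε ⋙ F)
    (hφψ : ∀ r : ℝ, φ.app r ≫ ψ.app (r + ε) =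
      F.map (homOfLE (show r ≤ r + ε + ε by linarith)))
    (p b : ℝ) :
    leB C (rankB F (p - ε) (s (n + 1))) (rankB G p b) := by
  have hc : s (n + 1) ≤ max (s (n + 1)) (max p b + ε) := le_max_left _ _
  rw [← rankB_eq_of_Ioc_inter_eq_empty hF (p - ε) hc
    (Ioc_inter_image_Icc_eq_empty_of_le hs le_rfl _)]
  exact leB_rankB_of_interleaving hε φ ψ hφψ p b _ (le_max_right _ _)

theorem leB_dFB_grow {F G : ℝ ⥤ C} {n : ℕ} {s : ℕ → ℝ} (hs : StrictMono s)
    (hF : ∀ (p q : ℝ) (h : p ≤ q), Ioc p q ∩ s '' Icc 1 n = ∅ → IsIso (F.map (homOfLE h)))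
    {m : ℕ} {t : ℕ → ℝ}
    (hG : ∀ (p q : ℝ) (h : p ≤ q), Ioc p q ∩ t '' Icc 1 m = ∅ → IsIso (G.map (homOfLE h)))
    {δ : ℝ} (hδ : 0 < δ) (hδF : ∀ i ≤ n, δ < s (i + 1) - s i)
    {ε : ℝ} (hε : 0 ≤ ε) (φ : F ⟶ Shift ε ⋙ G) (ψ : G ⟶ Shift ε ⋙ F)
    (hφψ : ∀ r : ℝ, φ.app r ≫ ψ.app (r + ε) =
      F.map (homOfLE (show r ≤ r + ε + ε by linarith)))
    (I : Dgm) :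
    leB C (dFB C n s δ F (I.grow ε hε)) (dFB C m t δ G I) := by
  cases hq : I.1.2 using EReal.rec with
  | bot => exact absurd (hq ▸ I.2) not_lt_bot
  | coe q =>
    have hgrow : (I.grow ε hε).1.2 = (q + ε : ℝ) := by
      change I.1.2 + (ε : EReal) = _
      rw [hq, EReal.coe_add]
    rw [dFB_of_eq_coe n s δ F hgrow, dFB_of_eq_coe m t δ G hq]
    exact leB_rankB_grow_of_lt hs hF ((finite_Icc 1 m).image t) hG hδ hδF hε φ ψ hφψ
      (EReal.coe_lt_coe_iff.mp (hq ▸ I.2))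
  | top =>
    have hgrow : (I.grow ε hε).1.2 = ⊤ := by
      change I.1.2 + (ε : EReal) = _
      rw [hq, EReal.top_add_coe]
    rw [dFB_of_eq_top n s δ F hgrow, dFB_of_eq_top m t δ G hq]
    exact leB_rankB_grow_top hs hF hε φ ψ hφψ I.1.1 _

end Diagram

/-- Continuity of type `B` persistence diagrams: if `F` and `G` are `ε`-interleaved
constructible persistence modules valued in an abelian category, then for every interval
`I`, `dF_B(Grow^ε I) ⪯ dG_B(I)` and `dG_B(Grow^ε I) ⪯ dF_B(I)` in the ordered
Grothendieck group `B(C)`; hence the erosion distance between the type `B` persistence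
diagrams of `F` and `G` is at most the interleaving distance between `F` and `G`. -/
theorem typeB_diagram_continuity
    (F G : ℝ ⥤ C)
    -- constructibility data for `F`:
    (n : ℕ) (s : ℕ → ℝ) (hs : StrictMono s)
    (hFiso : ∀ (p q : ℝ) (h : p ≤ q), Set.Ioc p q ∩ (s '' Set.Icc 1 n) = ∅ →
      IsIso (F.map (homOfLE h)))
    -- constructibility data for `G`:
    (m : ℕ) (t : ℕ → ℝ) (ht : StrictMono t)
    (hGiso : ∀ (p q : ℝ) (h : p ≤ q), Set.Ioc p q ∩ (t '' Set.Icc 1 m) = ∅ →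
      IsIso (G.map (homOfLE h)))
    -- a sufficiently small `δ > 0`:
    (δ : ℝ) (hδ : 0 < δ)
    (hδF : ∀ i : ℕ, i ≤ n → δ < s (i + 1) - s i)
    (hδG : ∀ i : ℕ, i ≤ m → δ < t (i + 1) - t i)
    -- an `ε`-interleaving between `F` and `G`:
    (ε : ℝ) (hε : 0 ≤ ε)
    (φ : F ⟶ Shift ε ⋙ G) (ψ : G ⟶ Shift ε ⋙ F)
    (hφψ : ∀ r : ℝ, φ.app r ≫ ψ.app (r + ε) =
      F.map (homOfLE (show r ≤ r + ε + ε by linarith)))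
    (hψφ : ∀ r : ℝ, ψ.app r ≫ φ.app (r + ε) =
      G.map (homOfLE (show r ≤ r + ε + ε by linarith))) :
    ∀ I : Dgm,
      leB C (dFB C n s δ F (I.grow ε hε)) (dFB C m t δ G I) ∧
      leB C (dFB C m t δ G (I.grow ε hε)) (dFB C n s δ F I) :=
  fun I => ⟨leB_dFB_grow hs hFiso hGiso hδ hδF hε φ ψ hφψ I,
    leB_dFB_grow ht hGiso hFiso hδ hδG hε ψ φ hψφ I⟩
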